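/- Let s < 0, and for an integer k ≥ 1 define g_k(η) := 2^{−sk/2}( χ_{[k+1/8, k+1/4]}(η) + χ_{[−2k+1/4, −2k+1/2]}(η) ). For t > 0 and ξ ∈ ℝ define R_{k,t}(ξ) := χ_{[1/2,1]}(ξ) · | ∬_{ℝ²} (e^{2it(ξ−ξ₁)(ξ−ξ₂)} − 1)/(2(ξ−ξ₁)(ξ−ξ₂)) · g_k(ξ₁) g_k(ξ₂) g_k(ξ−ξ₁−ξ₂) dξ₁ dξ₂ |. Then there exist c > 0 and κ₀ ∈ (0,1) such that for every κ ∈ (0, κ₀] there is k₀ such that for all integers k ≥ k₀, with t = κ/k², one has R_{k,t}(ξ) ≥ c · 2^{−sk} · κ/k² for every ξ ∈ [5/8, 7/8]. -/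

import Mathlib

open MeasureTheory

/-- `g_k(η) = 2^{−sk/2}(χ_{[k+1/8, k+1/4]}(η) + χ_{[−2k+1/4, −2k+1/2]}(η))`. -/
noncomputable def gfun (s : ℝ) (k : ℕ) (η : ℝ) : ℝ :=
  (2 : ℝ) ^ (-s * (k : ℝ) / 2) *
    (Set.indicator (Set.Icc ((k : ℝ) + 1 / 8) ((k : ℝ) + 1 / 4)) (fun _ => (1 : ℝ)) η
      + Set.indicator (Set.Icc (-2 * (k : ℝ) + 1 / 4) (-2 * (k : ℝ) + 1 / 2)) (fun _ => (1 : ℝ)) η)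

/-- `R_{k,t}(ξ) = χ_{[1/2,1]}(ξ) · |∬ (e^{2it(ξ−ξ₁)(ξ−ξ₂)} − 1)/(2(ξ−ξ₁)(ξ−ξ₂))
  g_k(ξ₁) g_k(ξ₂) g_k(ξ−ξ₁−ξ₂) dξ₁ dξ₂|`. -/
noncomputable def Rfun (s : ℝ) (k : ℕ) (t ξ : ℝ) : ℝ :=
  Set.indicator (Set.Icc (1 / 2 : ℝ) 1) (fun _ => (1 : ℝ)) ξ *
    ‖∫ p : ℝ × ℝ,
      (Complex.exp (2 * Complex.I * (t : ℂ) * ((ξ - p.1 : ℝ) : ℂ) * ((ξ - p.2 : ℝ) : ℂ)) - 1)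
          / (2 * ((ξ - p.1 : ℝ) : ℂ) * ((ξ - p.2 : ℝ) : ℂ))
        * ((gfun s k p.1 : ℝ) : ℂ) * ((gfun s k p.2 : ℝ) : ℂ)
        * ((gfun s k (ξ - p.1 - p.2) : ℝ) : ℂ)‖

/-!
On the support of the integrand, `|ξ - ξᵢ| ≤ 3k`, so for `t = κ/k²` with `κ ≤ 1/6` the phase
`2t(ξ - ξ₁)(ξ - ξ₂)` stays in `[-π, π]`. Hence the imaginary part `sin(2tP)/(2P)` of the multiplier
is nonnegative everywhere, and `‖∫ f‖ ≥ Im ∫ f` is bounded below by the integral over any set.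
On the square of side `1/32` centred at `(k + ξ/4, k + ξ/4)` the three factors `g_k(ξ₁)`,
`g_k(ξ₂)`, `g_k(ξ - ξ₁ - ξ₂)` all equal `2^{-sk/2}` and `0 < P ≤ k²`, so Jordan's inequality gives
`Im ≥ (2/π) t 2^{-3sk/2}` there; since `s < 0`, `2^{-3sk/2} ≥ 2^{-sk}`.
-/

open Real Set

noncomputable def phaseMultiplier (t u v : ℝ) : ℂ :=
  (Complex.exp (2 * Complex.I * (t : ℂ) * (u : ℂ) * (v : ℂ)) - 1) / (2 * (u : ℂ) * (v : ℂ))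

section PhaseMultiplier

variable {t u v : ℝ}

lemma phaseMultiplier_eq (t u v : ℝ) :
    phaseMultiplier t u v
      = (Complex.exp (Complex.I * ((2 * t * (u * v) : ℝ) : ℂ)) - 1) / ((2 * (u * v) : ℝ) : ℂ) := by
  unfold phaseMultiplier
  push_cast
  ring_nf

lemma phaseMultiplier_im (t u v : ℝ) :
    (phaseMultiplier t u v).im = sin (2 * t * (u * v)) / (2 * (u * v)) := by
  rw [phaseMultiplier_eq, Complex.div_ofReal_im, Complex.sub_im, Complex.one_im, sub_zero,
    mul_comm Complex.I, Complex.exp_ofReal_mul_I_im]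

lemma norm_phaseMultiplier_le (t u v : ℝ) : ‖phaseMultiplier t u v‖ ≤ |t| := by
  rw [phaseMultiplier_eq, norm_div, Complex.norm_real, Real.norm_eq_abs]
  rcases eq_or_ne (u * v) 0 with huv | huv
  · simp [huv]
  refine div_le_of_le_mul₀ (abs_nonneg _) (abs_nonneg _) ?_
  calc _ ≤ ‖2 * t * (u * v)‖ := Real.norm_exp_I_mul_ofReal_sub_one_le
    _ = |t| * |2 * (u * v)| := by simp only [Real.norm_eq_abs, abs_mul, abs_two]; ring

lemma phaseMultiplier_im_nonneg (ht : 0 ≤ t) (hphase : 2 * t * |u * v| ≤ π) :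
    0 ≤ (phaseMultiplier t u v).im := by
  rw [phaseMultiplier_im]
  rcases le_total 0 (u * v) with huv | huv
  · rw [abs_of_nonneg huv] at hphase
    exact div_nonneg (sin_nonneg_of_nonneg_of_le_pi (by positivity) hphase) (by linarith)
  · rw [abs_of_nonpos huv] at hphase
    refine div_nonneg_of_nonpos (sin_nonpos_of_nonpos_of_neg_pi_le ?_ ?_) (by linarith)
    · exact mul_nonpos_of_nonneg_of_nonpos (by positivity) huv
    · linarith

lemma le_phaseMultiplier_im (ht : 0 ≤ t) (huv : 0 < u * v) (hphase : 2 * t * (u * v) ≤ π / 2) :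
    2 / π * t ≤ (phaseMultiplier t u v).im := by
  rw [phaseMultiplier_im, le_div_iff₀ (by positivity)]
  have := mul_le_sin (by positivity) hphase
  linarith

end PhaseMultiplier

def gSupport (k : ℕ) : Set ℝ :=
  Icc ((k : ℝ) + 1 / 8) ((k : ℝ) + 1 / 4) ∪ Icc (-2 * (k : ℝ) + 1 / 4) (-2 * (k : ℝ) + 1 / 2)

section Gfun

variable {s : ℝ} {k : ℕ} {η : ℝ}

lemma gfun_nonneg (s : ℝ) (k : ℕ) (η : ℝ) : 0 ≤ gfun s k η :=
  mul_nonneg (by positivity) (add_nonneg (indicator_nonneg (fun _ _ => zero_le_one) η)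
    (indicator_nonneg (fun _ _ => zero_le_one) η))

lemma gfun_le (s : ℝ) (k : ℕ) (η : ℝ) : gfun s k η ≤ 2 * (2 : ℝ) ^ (-s * k / 2) := by
  have indicator_le_one (S : Set ℝ) : S.indicator (fun _ => (1 : ℝ)) η ≤ 1 :=
    indicator_apply_le' (fun _ => le_rfl) (fun _ => zero_le_one)
  unfold gfun
  rw [mul_comm 2]
  gcongr
  linarith [indicator_le_one (Icc ((k : ℝ) + 1 / 8) ((k : ℝ) + 1 / 4)),
    indicator_le_one (Icc (-2 * (k : ℝ) + 1 / 4) (-2 * (k : ℝ) + 1 / 2))]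

lemma measurable_gfun (s : ℝ) (k : ℕ) : Measurable (gfun s k) :=
  measurable_const.mul ((measurable_const.indicator measurableSet_Icc).add
    (measurable_const.indicator measurableSet_Icc))

lemma gfun_eq_zero_of_notMem (hη : η ∉ gSupport k) : gfun s k η = 0 := by
  rw [gSupport, mem_union, not_or] at hη
  rw [gfun, indicator_of_notMem hη.1, indicator_of_notMem hη.2, add_zero, mul_zero]

lemma gfun_of_mem_Icc_left (hk : 0 < k) (hη : η ∈ Icc ((k : ℝ) + 1 / 8) ((k : ℝ) + 1 / 4)) :
    gfun s k η = (2 : ℝ) ^ (-s * k / 2) := by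
  have hk' : (1 : ℝ) ≤ k := by exact_mod_cast hk
  have hη' : η ∉ Icc (-2 * (k : ℝ) + 1 / 4) (-2 * (k : ℝ) + 1 / 2) := fun h => by
    linarith [hη.1, h.2]
  rw [gfun, indicator_of_mem hη, indicator_of_notMem hη', add_zero, mul_one]

lemma gfun_of_mem_Icc_right (hk : 0 < k)
    (hη : η ∈ Icc (-2 * (k : ℝ) + 1 / 4) (-2 * (k : ℝ) + 1 / 2)) :
    gfun s k η = (2 : ℝ) ^ (-s * k / 2) := by
  have hk' : (1 : ℝ) ≤ k := by exact_mod_cast hk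
  have hη' : η ∉ Icc ((k : ℝ) + 1 / 8) ((k : ℝ) + 1 / 4) := fun h => by
    linarith [hη.2, h.1]
  rw [gfun, indicator_of_mem hη, indicator_of_notMem hη', zero_add, mul_one]

lemma isCompact_gSupport (k : ℕ) : IsCompact (gSupport k) :=
  isCompact_Icc.union isCompact_Icc

lemma abs_sub_le_of_mem_gSupport (hk : 0 < k) {ξ : ℝ} (hξ : ξ ∈ Icc (0 : ℝ) 1)
    (hη : η ∈ gSupport k) : |ξ - η| ≤ 3 * k := by
  have hk' : (1 : ℝ) ≤ k := by exact_mod_cast hk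
  obtain ⟨hξ₀, hξ₁⟩ := hξ
  rcases hη with ⟨h₀, h₁⟩ | ⟨h₀, h₁⟩ <;> rw [abs_le] <;> constructor <;> linarith

end Gfun

lemma mul_measureReal_le_norm_integral {α : Type*} [MeasurableSpace α] {μ : Measure α}
    {f : α → ℂ} {S : Set α} {m : ℝ} (hf : Integrable f μ) (hf_im : ∀ x, 0 ≤ (f x).im)
    (hS : MeasurableSet S) (hμS : μ S ≠ ⊤) (hm : ∀ x ∈ S, m ≤ (f x).im) :
    m * μ.real S ≤ ‖∫ x, f x ∂μ‖ :=
  calc m * μ.real S ≤ ∫ x in S, (f x).im ∂μ :=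
        setIntegral_ge_of_const_le_real hS hμS hm hf.im.integrableOn
    _ ≤ ∫ x, (f x).im ∂μ := setIntegral_le_integral hf.im (ae_of_all _ hf_im)
    _ = (∫ x, f x ∂μ).im := integral_im hf
    _ ≤ ‖∫ x, f x ∂μ‖ := Complex.im_le_norm _

noncomputable def rfunIntegrand (s : ℝ) (k : ℕ) (t ξ : ℝ) (p : ℝ × ℝ) : ℂ :=
  phaseMultiplier t (ξ - p.1) (ξ - p.2) * (gfun s k p.1 : ℂ) * (gfun s k p.2 : ℂ)
    * (gfun s k (ξ - p.1 - p.2) : ℂ)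

def centralSquare (k : ℕ) (ξ : ℝ) : Set (ℝ × ℝ) :=
  Icc ((k : ℝ) + ξ / 4 - 1 / 64) ((k : ℝ) + ξ / 4 + 1 / 64) ×ˢ
    Icc ((k : ℝ) + ξ / 4 - 1 / 64) ((k : ℝ) + ξ / 4 + 1 / 64)

section Integrand

variable {s : ℝ} {k : ℕ} {t ξ : ℝ}

lemma Rfun_eq_norm_integral (hξ : ξ ∈ Icc (1 / 2 : ℝ) 1) :
    Rfun s k t ξ = ‖∫ p, rfunIntegrand s k t ξ p‖ := by
  rw [Rfun, indicator_of_mem hξ, one_mul]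
  rfl

lemma rfunIntegrand_im (s : ℝ) (k : ℕ) (t ξ : ℝ) (p : ℝ × ℝ) :
    (rfunIntegrand s k t ξ p).im
      = (phaseMultiplier t (ξ - p.1) (ξ - p.2)).im
        * (gfun s k p.1 * gfun s k p.2 * gfun s k (ξ - p.1 - p.2)) := by
  simp only [rfunIntegrand, Complex.im_mul_ofReal]
  ring

lemma measurable_rfunIntegrand (s : ℝ) (k : ℕ) (t ξ : ℝ) : Measurable (rfunIntegrand s k t ξ) := by
  have hg := measurable_gfun s k
  unfold rfunIntegrand phaseMultiplier
  fun_prop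

lemma rfunIntegrand_eq_zero_of_notMem {p : ℝ × ℝ} (hp : p ∉ gSupport k ×ˢ gSupport k) :
    rfunIntegrand s k t ξ p = 0 := by
  rw [mem_prod, not_and_or] at hp
  rcases hp with hp | hp <;> simp [rfunIntegrand, gfun_eq_zero_of_notMem hp]

lemma integrable_rfunIntegrand (s : ℝ) (k : ℕ) (t ξ : ℝ) : Integrable (rfunIntegrand s k t ξ) := by
  have hK := (isCompact_gSupport k).prod (isCompact_gSupport k)
  refine IntegrableOn.integrable_of_forall_notMem_eq_zero ?_
    (fun p hp => rfunIntegrand_eq_zero_of_notMem hp)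
  refine Measure.integrableOn_of_bounded hK.measure_lt_top.ne
    (measurable_rfunIntegrand s k t ξ).aestronglyMeasurable
    (M := |t| * (2 * (2 : ℝ) ^ (-s * k / 2)) ^ 3) (ae_of_all _ fun p => ?_)
  have hg (η : ℝ) : ‖(gfun s k η : ℂ)‖ ≤ 2 * (2 : ℝ) ^ (-s * k / 2) := by
    rw [Complex.norm_real, Real.norm_of_nonneg (gfun_nonneg s k η)]
    exact gfun_le s k η
  rw [rfunIntegrand, norm_mul, norm_mul, norm_mul, pow_three, ← mul_assoc, ← mul_assoc]
  gcongr
  exacts [norm_phaseMultiplier_le _ _ _, hg _, hg _, hg _]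

end Integrand

section LowerBound

variable {s : ℝ} {k : ℕ} {t ξ : ℝ}

lemma rfunIntegrand_im_nonneg (hk : 0 < k) (ht : 0 ≤ t) (htk : 18 * t * k ^ 2 ≤ π)
    (hξ : ξ ∈ Icc (0 : ℝ) 1) (p : ℝ × ℝ) : 0 ≤ (rfunIntegrand s k t ξ p).im := by
  by_cases hp : p ∈ gSupport k ×ˢ gSupport k
  swap
  · rw [rfunIntegrand_eq_zero_of_notMem hp, Complex.zero_im]
  have h₁ := abs_sub_le_of_mem_gSupport hk hξ hp.1
  have h₂ := abs_sub_le_of_mem_gSupport hk hξ hp.2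
  have hphase : 2 * t * |(ξ - p.1) * (ξ - p.2)| ≤ π :=
    calc 2 * t * |(ξ - p.1) * (ξ - p.2)| ≤ 2 * t * (3 * k * (3 * k)) := by
          rw [abs_mul]; gcongr
      _ = 18 * t * k ^ 2 := by ring
      _ ≤ π := htk
  rw [rfunIntegrand_im]
  exact mul_nonneg (phaseMultiplier_im_nonneg ht hphase)
    (mul_nonneg (mul_nonneg (gfun_nonneg s k _) (gfun_nonneg s k _)) (gfun_nonneg s k _))

lemma le_rfunIntegrand_im_of_mem_centralSquare (hk : 0 < k) (ht : 0 ≤ t)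
    (htk : 18 * t * k ^ 2 ≤ π) (hξ : ξ ∈ Icc (5 / 8 : ℝ) (7 / 8)) {p : ℝ × ℝ}
    (hp : p ∈ centralSquare k ξ) :
    2 / π * t * ((2 : ℝ) ^ (-s * k / 2)) ^ 3 ≤ (rfunIntegrand s k t ξ p).im := by
  obtain ⟨⟨hp₁, hp₁'⟩, ⟨hp₂, hp₂'⟩⟩ := hp
  obtain ⟨hξ₀, hξ₁⟩ := hξ
  rw [rfunIntegrand_im, gfun_of_mem_Icc_left hk ⟨by linarith, by linarith⟩,
    gfun_of_mem_Icc_left hk ⟨by linarith, by linarith⟩,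
    gfun_of_mem_Icc_right hk ⟨by linarith, by linarith⟩, ← pow_three']
  have hk' : (1 : ℝ) ≤ k := by exact_mod_cast hk
  have hpos : 0 < (ξ - p.1) * (ξ - p.2) := mul_pos_of_neg_of_neg (by linarith) (by linarith)
  have hle : (ξ - p.1) * (ξ - p.2) ≤ k ^ 2 := by nlinarith
  have hphase : 2 * t * ((ξ - p.1) * (ξ - p.2)) ≤ π / 2 := by
    have := mul_le_mul_of_nonneg_left hle (by positivity : 0 ≤ 2 * t)
    nlinarith [pi_pos]
  gcongr
  exact le_phaseMultiplier_im ht hpos hphase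

lemma volume_real_centralSquare (k : ℕ) (ξ : ℝ) : volume.real (centralSquare k ξ) = 1 / 1024 := by
  rw [centralSquare, Measure.volume_eq_prod, measureReal_prod_prod, Real.volume_real_Icc_of_le]
  · norm_num
  · linarith

lemma measurableSet_centralSquare (k : ℕ) (ξ : ℝ) : MeasurableSet (centralSquare k ξ) :=
  measurableSet_Icc.prod measurableSet_Icc

lemma le_Rfun (hk : 0 < k) (ht : 0 ≤ t) (htk : 18 * t * k ^ 2 ≤ π)
    (hξ : ξ ∈ Icc (5 / 8 : ℝ) (7 / 8)) :
    2 / π * t * ((2 : ℝ) ^ (-s * k / 2)) ^ 3 * (1 / 1024) ≤ Rfun s k t ξ := by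
  rw [Rfun_eq_norm_integral (Icc_subset_Icc (by norm_num) (by norm_num) hξ),
    ← volume_real_centralSquare k ξ]
  exact mul_measureReal_le_norm_integral (integrable_rfunIntegrand s k t ξ)
    (rfunIntegrand_im_nonneg hk ht htk (Icc_subset_Icc (by norm_num) (by norm_num) hξ))
    (measurableSet_centralSquare k ξ) (isCompact_Icc.prod isCompact_Icc).measure_lt_top.ne
    (fun p hp => le_rfunIntegrand_im_of_mem_centralSquare hk ht htk hξ hp)

end LowerBound

lemma two_rpow_le_two_rpow_half_pow_three {x : ℝ} (hx : 0 ≤ x) :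
    (2 : ℝ) ^ x ≤ ((2 : ℝ) ^ (x / 2)) ^ 3 := by
  rw [← Real.rpow_mul_natCast zero_le_two]
  exact Real.rpow_le_rpow_of_exponent_le one_le_two (by push_cast; linarith)

/-- For `s < 0` there are `c > 0` and `κ₀ ∈ (0,1)` such that for each `κ ∈ (0,κ₀]` there is
`k₀` with: for all integers `k ≥ k₀`, setting `t = κ/k²`,
`R_{k,t}(ξ) ≥ c · 2^{−sk} κ/k²` for every `ξ ∈ [5/8, 7/8]`. -/
theorem stmt_15 (s : ℝ) (hs : s < 0) :
    ∃ c > (0 : ℝ), ∃ κ₀ ∈ Set.Ioo (0 : ℝ) 1, ∀ κ ∈ Set.Ioc (0 : ℝ) κ₀, ∃ k₀ : ℕ,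
      ∀ k : ℕ, k₀ ≤ k → ∀ ξ ∈ Set.Icc (5 / 8 : ℝ) (7 / 8),
        c * (2 : ℝ) ^ (-s * (k : ℝ)) * κ / (k : ℝ) ^ 2 ≤ Rfun s k (κ / (k : ℝ) ^ 2) ξ := by
  refine ⟨1 / (512 * π), by positivity, 1 / 6, ⟨by norm_num, by norm_num⟩, ?_⟩
  rintro κ ⟨hκ, hκ₀⟩
  refine ⟨1, fun k hk ξ hξ => ?_⟩
  have hk' : (0 : ℝ) < k := by exact_mod_cast hk
  have htk : 18 * (κ / k ^ 2) * k ^ 2 ≤ π := by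
    have : 18 * (κ / k ^ 2) * k ^ 2 = 18 * κ := by field_simp
    linarith [pi_gt_three]
  have hpow := two_rpow_le_two_rpow_half_pow_three (x := -s * k) (by nlinarith)
  calc 1 / (512 * π) * (2 : ℝ) ^ (-s * k) * κ / k ^ 2
      ≤ 1 / (512 * π) * ((2 : ℝ) ^ (-s * k / 2)) ^ 3 * κ / k ^ 2 := by gcongr
    _ = 2 / π * (κ / k ^ 2) * ((2 : ℝ) ^ (-s * k / 2)) ^ 3 * (1 / 1024) := by
      field_simp; ring
    _ ≤ Rfun s k (κ / k ^ 2) ξ := le_Rfun hk (by positivity) htk hξ
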